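/- arXiv:2409.07391 — 2 statements merged into one kernel-verified Lean document; each statement's English description precedes it below -/
import Mathlib

section
/- Let N_0 be Binomial(N, p_0) (the count of V*_i = 0 among N i.i.d. samples), and define p_0^N = N_0/N. Suppose √N_0 (ψ̂_gen − ψ_0) ⇒ N(0, σ_0²), √N_1 (ψ̂_1 − ψ_1) ⇒ N(0, σ_1²), these being asymptotically independent of each other and of p_0^N. Then √N (p_0^N ψ̂_gen + (1 − p_0^N) ψ̂_1 − (p_0 ψ_0 + (1−p_0) ψ_1)) ⇒ N(0, p_0(1−p_0)(ψ_0 − ψ_1)² + p_0 σ_0² + (1−p_0) σ_1²). -/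
open MeasureTheory ProbabilityTheory Filter

/-- Convergence in distribution, characterized by bounded continuous test functions. -/
def ConvInDist {Ω E : Type*} [MeasurableSpace Ω] [MeasurableSpace E] [TopologicalSpace E]
    (μ : Measure Ω) (X : ℕ → Ω → E) (ν : Measure E) : Prop :=
  ∀ g : BoundedContinuousFunction E ℝ,
    Tendsto (fun n => ∫ ω, g (X n ω) ∂μ) atTop (nhds (∫ x, g x ∂ν))

open Real
open scoped NNReal ENNReal

lemma sqrt_add_le (b c : ℝ) (hb : 0 ≤ b) (hc : 0 ≤ c) :
    Real.sqrt (b + c) ≤ Real.sqrt b + Real.sqrt c := by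
  have h : b + c ≤ (Real.sqrt b + Real.sqrt c) ^ 2 := by
    have hb' := Real.sq_sqrt hb
    have hc' := Real.sq_sqrt hc
    have : 0 ≤ Real.sqrt b * Real.sqrt c := by positivity
    nlinarith
  calc Real.sqrt (b + c) ≤ Real.sqrt ((Real.sqrt b + Real.sqrt c) ^ 2) := Real.sqrt_le_sqrt h
    _ = Real.sqrt b + Real.sqrt c := Real.sqrt_sq (by positivity)

lemma abs_sqrt_sub_sqrt_le (a b : ℝ) : |Real.sqrt a - Real.sqrt b| ≤ Real.sqrt |a - b| := by
  wlog h : b ≤ a with H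
  · rw [abs_sub_comm, abs_sub_comm a b]; exact H b a (le_of_not_ge h)
  rcases le_or_gt a 0 with ha | ha
  · have : Real.sqrt a = 0 := Real.sqrt_eq_zero_of_nonpos ha
    have hb0 : Real.sqrt b = 0 := Real.sqrt_eq_zero_of_nonpos (le_trans h ha)
    simp [this, hb0, Real.sqrt_nonneg]
  · have hs : Real.sqrt b ≤ Real.sqrt a := Real.sqrt_le_sqrt h
    rw [abs_of_nonneg (sub_nonneg.2 hs), abs_of_nonneg (sub_nonneg.2 h)]
    rcases le_or_gt b 0 with hb | hb
    · have hb0 : Real.sqrt b = 0 := Real.sqrt_eq_zero_of_nonpos hb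
      rw [hb0, sub_zero]
      exact Real.sqrt_le_sqrt (by linarith)
    · have := sqrt_add_le b (a - b) hb.le (by linarith)
      have h2 : b + (a - b) = a := by ring
      rw [h2] at this
      linarith

lemma gaussian_conv_pdfReal (v w : ℝ≥0) (hv : v ≠ 0) (hw : w ≠ 0) (y : ℝ) :
    ∫ x, gaussianPDFReal 0 v x * gaussianPDFReal 0 w (y - x) = gaussianPDFReal 0 (v + w) y := by
  have hv' : 0 < (v : ℝ) := by exact_mod_cast pos_iff_ne_zero.2 hv
  have hw' : 0 < (w : ℝ) := by exact_mod_cast pos_iff_ne_zero.2 hw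
  set b : ℝ := ((v : ℝ) + w) / (2 * v * w) with hbdef
  have hb : 0 < b := by positivity
  set m : ℝ := (v : ℝ) * y / ((v : ℝ) + w) with hmdef
  have key : ∀ x : ℝ, gaussianPDFReal 0 v x * gaussianPDFReal 0 w (y - x)
      = ((Real.sqrt (2 * π * v))⁻¹ * (Real.sqrt (2 * π * w))⁻¹
          * rexp (- y ^ 2 / (2 * ((v : ℝ) + w)))) * rexp (- b * (x - m) ^ 2) := by
    intro x
    simp only [gaussianPDFReal, sub_zero]
    have hE : - x ^ 2 / (2 * (v : ℝ)) + - (y - x) ^ 2 / (2 * (w : ℝ))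
        = - y ^ 2 / (2 * ((v : ℝ) + w)) + - b * (x - m) ^ 2 := by
      rw [hbdef, hmdef]; field_simp; ring
    calc (Real.sqrt (2 * π * v))⁻¹ * rexp (- x ^ 2 / (2 * v))
          * ((Real.sqrt (2 * π * w))⁻¹ * rexp (- (y - x) ^ 2 / (2 * w)))
        = (Real.sqrt (2 * π * v))⁻¹ * (Real.sqrt (2 * π * w))⁻¹
          * rexp (- x ^ 2 / (2 * (v : ℝ)) + - (y - x) ^ 2 / (2 * (w : ℝ))) := by
          rw [Real.exp_add]; ring
      _ = _ := by rw [hE, Real.exp_add]; ring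
  rw [integral_congr_ae (ae_of_all _ key), integral_const_mul]
  have hint : ∫ x : ℝ, rexp (- b * (x - m) ^ 2) = Real.sqrt (π / b) := by
    rw [show (fun x : ℝ => rexp (- b * (x - m) ^ 2)) = fun x => (fun t => rexp (- b * t ^ 2)) (x - m) from rfl]
    rw [integral_sub_right_eq_self (fun t => rexp (- b * t ^ 2)) m]
    exact integral_gaussian b
  rw [hint]
  have hcoef : (Real.sqrt (2 * π * v))⁻¹ * (Real.sqrt (2 * π * w))⁻¹ * Real.sqrt (π / b)
      = (Real.sqrt (2 * π * ((v : ℝ) + w)))⁻¹ := by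
    have h1 : π / b = (2 * π * v) * (2 * π * w) / (2 * π * ((v : ℝ) + w)) := by
      rw [hbdef]; field_simp
    rw [h1, Real.sqrt_div (by positivity), Real.sqrt_mul (by positivity)]
    have h2 : Real.sqrt (2 * π * v) ≠ 0 := by positivity
    have h3 : Real.sqrt (2 * π * w) ≠ 0 := by positivity
    field_simp
    rw [← Real.sqrt_mul (by positivity : (0:ℝ) ≤ 2 * π), ← Real.sqrt_mul (by positivity : (0:ℝ) ≤ 2 * π * v)]
    congr 1; ring
  simp only [gaussianPDFReal, sub_zero]
  have hc : ((v + w : ℝ≥0) : ℝ) = (v : ℝ) + w := by push_cast; ring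
  rw [hc, ← hcoef]; ring

lemma gaussian_conv_pdf (v w : ℝ≥0) (hv : v ≠ 0) (hw : w ≠ 0) (y : ℝ) :
    ∫⁻ x, gaussianPDF 0 v x * gaussianPDF 0 w (y - x) = gaussianPDF 0 (v + w) y := by
  have hmeas : Measurable (fun x => gaussianPDFReal 0 v x * gaussianPDFReal 0 w (y - x)) :=
    (measurable_gaussianPDFReal 0 v).mul
      ((measurable_gaussianPDFReal 0 w).comp (measurable_const.sub measurable_id))
  have hint : Integrable (fun x => gaussianPDFReal 0 v x * gaussianPDFReal 0 w (y - x)) := by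
    refine Integrable.mono ((integrable_gaussianPDFReal 0 v).const_mul ((Real.sqrt (2 * π * w))⁻¹))
      hmeas.aestronglyMeasurable (ae_of_all _ fun x => ?_)
    have h1 : 0 ≤ gaussianPDFReal 0 v x := gaussianPDFReal_nonneg _ _ _
    have h2 : gaussianPDFReal 0 w (y - x) ≤ (Real.sqrt (2 * π * w))⁻¹ := by
      rw [gaussianPDFReal]
      have : rexp (- (y - x - 0) ^ 2 / (2 * w)) ≤ 1 := by
        rw [Real.exp_le_one_iff, neg_div]
        exact neg_nonpos.2 (by positivity)
      nlinarith [Real.sqrt_nonneg (2 * π * (w:ℝ)), inv_nonneg.2 (Real.sqrt_nonneg (2 * π * (w:ℝ)))]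
    rw [Real.norm_eq_abs, Real.norm_eq_abs, abs_of_nonneg (by positivity : (0:ℝ) ≤ (Real.sqrt (2 * π * ↑w))⁻¹ * gaussianPDFReal 0 v x),
      abs_of_nonneg (mul_nonneg h1 (gaussianPDFReal_nonneg _ _ _))]
    calc gaussianPDFReal 0 v x * gaussianPDFReal 0 w (y - x)
        ≤ gaussianPDFReal 0 v x * (Real.sqrt (2 * π * w))⁻¹ := by
          exact mul_le_mul_of_nonneg_left h2 h1
      _ = (Real.sqrt (2 * π * w))⁻¹ * gaussianPDFReal 0 v x := by ring
  calc ∫⁻ x, gaussianPDF 0 v x * gaussianPDF 0 w (y - x)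
      = ∫⁻ x, ENNReal.ofReal (gaussianPDFReal 0 v x * gaussianPDFReal 0 w (y - x)) := by
        refine lintegral_congr fun x => ?_
        rw [gaussianPDF, gaussianPDF, ← ENNReal.ofReal_mul (gaussianPDFReal_nonneg _ _ _)]
    _ = ENNReal.ofReal (∫ x, gaussianPDFReal 0 v x * gaussianPDFReal 0 w (y - x)) := by
        rw [← ofReal_integral_eq_lintegral_ofReal hint (ae_of_all _ fun x =>
          mul_nonneg (gaussianPDFReal_nonneg _ _ _) (gaussianPDFReal_nonneg _ _ _))]
    _ = gaussianPDF 0 (v + w) y := by rw [gaussian_conv_pdfReal v w hv hw y]; rfl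

lemma gaussianReal_conv (v w : ℝ≥0) :
    ((gaussianReal 0 v).prod (gaussianReal 0 w)).map (fun p : ℝ × ℝ => p.1 + p.2)
      = gaussianReal 0 (v + w) := by
  have hadd : Measurable (fun p : ℝ × ℝ => p.1 + p.2) := measurable_fst.add measurable_snd
  rcases eq_or_ne v 0 with rfl | hv
  · rw [gaussianReal_zero_var, Measure.dirac_prod, Measure.map_map hadd measurable_prodMk_left,
      zero_add]
    have : ((fun p : ℝ × ℝ => p.1 + p.2) ∘ Prod.mk (0:ℝ)) = id := by funext y; simp
    rw [this, Measure.map_id]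
  rcases eq_or_ne w 0 with rfl | hw
  · rw [gaussianReal_zero_var, Measure.prod_dirac,
      Measure.map_map hadd measurable_prodMk_right, add_zero]
    have : ((fun p : ℝ × ℝ => p.1 + p.2) ∘ (fun x : ℝ => (x, (0:ℝ)))) = id := by funext y; simp
    rw [this, Measure.map_id]
  have hvw : v + w ≠ 0 := by simp [hv]
  ext s hs
  rw [Measure.map_apply hadd hs, gaussianReal_apply _ hvw s,
    gaussianReal_of_var_ne_zero _ hv, gaussianReal_of_var_ne_zero _ hw,
    Measure.prod_apply (hadd hs)]
  have hstep1 : ∀ x : ℝ, (volume.withDensity (gaussianPDF 0 w)) (Prod.mk x ⁻¹' ((fun p : ℝ × ℝ => p.1 + p.2) ⁻¹' s))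
      = ∫⁻ y, s.indicator (fun _ => (1:ℝ≥0∞)) y * gaussianPDF 0 w (y - x) := by
    intro x
    have hpre : MeasurableSet (Prod.mk x ⁻¹' ((fun p : ℝ × ℝ => p.1 + p.2) ⁻¹' s)) :=
      measurable_prodMk_left (hadd hs)
    rw [withDensity_apply _ hpre, ← lintegral_indicator hpre]
    have hfun : ∀ y : ℝ, (Prod.mk x ⁻¹' ((fun p : ℝ × ℝ => p.1 + p.2) ⁻¹' s)).indicator (gaussianPDF 0 w) y
        = (fun z => s.indicator (fun _ => (1:ℝ≥0∞)) z * gaussianPDF 0 w (z - x)) (y + x) := by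
      intro y
      have hy : (y ∈ Prod.mk x ⁻¹' ((fun p : ℝ × ℝ => p.1 + p.2) ⁻¹' s)) ↔ y + x ∈ s := by
        simp [Set.mem_preimage, add_comm]
      classical
      simp only [Set.indicator_apply, add_sub_cancel_right]
      by_cases h : y + x ∈ s
      · rw [if_pos (hy.2 h), if_pos h, one_mul]
      · rw [if_neg (fun hmem => h (hy.1 hmem)), if_neg h, zero_mul]
    rw [lintegral_congr hfun]
    exact lintegral_add_right_eq_self (fun z => s.indicator (fun _ => (1:ℝ≥0∞)) z * gaussianPDF 0 w (z - x)) x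
  rw [lintegral_congr fun x => hstep1 x]
  have hG : Measurable (Function.uncurry fun x y : ℝ =>
      s.indicator (fun _ => (1:ℝ≥0∞)) y * gaussianPDF 0 w (y - x)) := by
    apply Measurable.mul
    · exact (measurable_one.indicator hs).comp measurable_snd
    · exact (measurable_gaussianPDF 0 w).comp (measurable_snd.sub measurable_fst)
  have hF : Measurable (Function.uncurry fun x y : ℝ =>
      gaussianPDF 0 v x * (s.indicator (fun _ => (1:ℝ≥0∞)) y * gaussianPDF 0 w (y - x))) :=
    ((measurable_gaussianPDF 0 v).comp measurable_fst).mul hG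
  rw [lintegral_withDensity_eq_lintegral_mul _ (measurable_gaussianPDF 0 v)
    hG.lintegral_prod_right]
  simp only [Pi.mul_apply]
  rw [lintegral_congr fun x => (lintegral_const_mul' (gaussianPDF 0 v x) _ ENNReal.ofReal_ne_top).symm]
  rw [lintegral_lintegral_swap hF.aemeasurable]
  have hindne : ∀ y : ℝ, s.indicator (fun _ => (1:ℝ≥0∞)) y ≠ ⊤ := by
    intro y
    by_cases h : y ∈ s <;> simp [Set.indicator_apply, h]
  have hstep2 : ∀ y : ℝ, ∫⁻ x, gaussianPDF 0 v x * (s.indicator (fun _ => (1:ℝ≥0∞)) y * gaussianPDF 0 w (y - x))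
      = s.indicator (fun _ => (1:ℝ≥0∞)) y * gaussianPDF 0 (v + w) y := by
    intro y
    rw [← gaussian_conv_pdf v w hv hw y, ← lintegral_const_mul' _ _ (hindne y)]
    exact lintegral_congr fun x => by ring
  rw [lintegral_congr hstep2, ← lintegral_indicator hs]
  refine lintegral_congr fun y => ?_
  by_cases h : y ∈ s <;> simp [Set.indicator_apply, h]

lemma gaussianReal_map_linear2 (b c : ℝ) (v2 v3 : ℝ≥0) :
    ((gaussianReal 0 v2).prod (gaussianReal 0 v3)).map (fun q : ℝ × ℝ => b * q.1 + c * q.2)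
      = gaussianReal 0 (NNReal.mk (b ^ 2) (sq_nonneg b) * v2 + NNReal.mk (c ^ 2) (sq_nonneg c) * v3) := by
  have hcomp : (fun q : ℝ × ℝ => b * q.1 + c * q.2)
      = (fun p : ℝ × ℝ => p.1 + p.2) ∘ (Prod.map (fun x => b * x) (fun x => c * x)) := rfl
  rw [hcomp, ← Measure.map_map (g := fun p : ℝ × ℝ => p.1 + p.2) (measurable_fst.add measurable_snd)
    ((by fun_prop : Measurable fun x : ℝ => b * x).prodMap (by fun_prop : Measurable fun x : ℝ => c * x)),
    ← Measure.map_prod_map _ _ (by fun_prop : Measurable fun x : ℝ => b * x) (by fun_prop : Measurable fun x : ℝ => c * x)]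
  have h2 : (gaussianReal 0 v2).map (fun x => b * x) = gaussianReal 0 (NNReal.mk (b ^ 2) (sq_nonneg b) * v2) := by
    simpa using gaussianReal_map_const_mul (μ := 0) (v := v2) b
  have h3 : (gaussianReal 0 v3).map (fun x => c * x) = gaussianReal 0 (NNReal.mk (c ^ 2) (sq_nonneg c) * v3) := by
    simpa using gaussianReal_map_const_mul (μ := 0) (v := v3) c
  rw [h2, h3, gaussianReal_conv]

lemma gaussianReal_map_linear3 (a b c : ℝ) (v1 v2 v3 : ℝ≥0) :
    ((gaussianReal 0 v1).prod ((gaussianReal 0 v2).prod (gaussianReal 0 v3))).map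
        (fun p : ℝ × ℝ × ℝ => a * p.1 + (b * p.2.1 + c * p.2.2))
      = gaussianReal 0 (NNReal.mk (a ^ 2) (sq_nonneg a) * v1 + (NNReal.mk (b ^ 2) (sq_nonneg b) * v2 + NNReal.mk (c ^ 2) (sq_nonneg c) * v3)) := by
  have hg23 : Measurable (fun q : ℝ × ℝ => b * q.1 + c * q.2) :=
    (measurable_fst.const_mul b).add (measurable_snd.const_mul c)
  have hcomp : (fun p : ℝ × ℝ × ℝ => a * p.1 + (b * p.2.1 + c * p.2.2))
      = (fun p : ℝ × ℝ => p.1 + p.2) ∘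
        (Prod.map (fun x => a * x) (fun q : ℝ × ℝ => b * q.1 + c * q.2)) := rfl
  rw [hcomp, ← Measure.map_map (g := fun p : ℝ × ℝ => p.1 + p.2) (measurable_fst.add measurable_snd)
    ((by fun_prop : Measurable fun x : ℝ => a * x).prodMap hg23),
    ← Measure.map_prod_map _ _ (by fun_prop : Measurable fun x : ℝ => a * x) hg23]
  have h1 : (gaussianReal 0 v1).map (fun x => a * x) = gaussianReal 0 (NNReal.mk (a ^ 2) (sq_nonneg a) * v1) := by
    simpa using gaussianReal_map_const_mul (μ := 0) (v := v1) a
  rw [h1, gaussianReal_map_linear2, gaussianReal_conv]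

section CMT

variable {Ω : Type*} [MeasurableSpace Ω] {μ : Measure Ω} [IsProbabilityMeasure μ]

/-- cutoff function as a bounded continuous function -/
noncomputable def cutoff (M : ℝ) : BoundedContinuousFunction (ℝ × ℝ × ℝ) ℝ :=
  BoundedContinuousFunction.mkOfBound
    ⟨fun x => min 1 (max (‖x‖ - M) 0),
      continuous_const.min ((continuous_norm.sub continuous_const).max continuous_const)⟩ 1
    (by
      intro x y
      have h1 : ∀ z : ℝ × ℝ × ℝ, 0 ≤ min 1 (max (‖z‖ - M) 0) :=
        fun z => le_min zero_le_one (le_max_right _ _)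
      have h2 : ∀ z : ℝ × ℝ × ℝ, min 1 (max (‖z‖ - M) 0) ≤ 1 := fun z => min_le_left _ _
      rw [Real.dist_eq, abs_sub_le_iff]
      constructor <;> simp only [ContinuousMap.coe_mk] <;>
        [linarith [h1 y, h2 x]; linarith [h1 x, h2 y]])

lemma cutoff_apply (M : ℝ) (x : ℝ × ℝ × ℝ) : cutoff M x = min 1 (max (‖x‖ - M) 0) := rfl

lemma cutoff_nonneg (M : ℝ) (x : ℝ × ℝ × ℝ) : 0 ≤ cutoff M x := by
  rw [cutoff_apply]; exact le_min zero_le_one (le_max_right _ _)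

lemma cutoff_le_one (M : ℝ) (x : ℝ × ℝ × ℝ) : cutoff M x ≤ 1 := by
  rw [cutoff_apply]; exact min_le_left _ _

lemma cutoff_eq_zero (M : ℝ) (x : ℝ × ℝ × ℝ) (h : ‖x‖ ≤ M) : cutoff M x = 0 := by
  rw [cutoff_apply, max_eq_right (by linarith : ‖x‖ - M ≤ 0)]
  exact min_eq_right zero_le_one

lemma cutoff_eq_one (M : ℝ) (x : ℝ × ℝ × ℝ) (h : M + 1 ≤ ‖x‖) : cutoff M x = 1 := by
  rw [cutoff_apply]
  exact min_eq_left (le_max_of_le_left (by linarith))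

lemma integrable_of_bound (f : Ω → ℝ) (hf : AEStronglyMeasurable f μ) (c : ℝ)
    (h : ∀ ω, |f ω| ≤ c) : Integrable f μ :=
  Integrable.mono' (integrable_const c) hf (ae_of_all _ fun ω => by
    rw [Real.norm_eq_abs]; exact h ω)

/-- Extended continuous mapping theorem, for our setting. -/
lemma convInDist_comp (ν : Measure (ℝ × ℝ × ℝ)) [IsProbabilityMeasure ν]
    (W : ℕ → Ω → ℝ × ℝ × ℝ) (hW : ConvInDist μ W ν)
    (hmeas : ∀ᶠ N in atTop, AEMeasurable (W N) μ)
    (Fn : ℕ → ℝ × ℝ × ℝ → ℝ) (F : ℝ × ℝ × ℝ → ℝ)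
    (hFncont : ∀ N, Continuous (Fn N)) (hFcont : Continuous F)
    (happrox : ∀ R : ℝ, 0 < R → ∀ δ : ℝ, 0 < δ →
      ∀ᶠ N in atTop, ∀ x ∈ Metric.closedBall (0 : ℝ × ℝ × ℝ) R, dist (Fn N x) (F x) < δ) :
    ConvInDist μ (fun N ω => Fn N (W N ω)) (ν.map F) := by
  intro g
  have hlim : ∫ x, g x ∂(ν.map F) = ∫ p, g (F p) ∂ν :=
    integral_map hFcont.measurable.aemeasurable (g.continuous.aestronglyMeasurable)
  rw [hlim]
  rw [Metric.tendsto_atTop]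
  intro ε hε
  set C : ℝ := ‖g‖ with hCdef
  have hC0 : 0 ≤ C := norm_nonneg g
  have hC : ∀ t : ℝ, |g t| ≤ C := fun t => by
    rw [← Real.norm_eq_abs]; exact g.norm_coe_le_norm t
  set ε' : ℝ := ε / (16 * C + 16) with hε'def
  have hε' : 0 < ε' := by positivity
  -- tail bound for ν
  have htail : Tendsto (fun M : ℕ => ν {x : ℝ × ℝ × ℝ | (M : ℝ) ≤ ‖x‖}) atTop (nhds 0) := by
    have hmeasSet : ∀ M : ℕ, MeasurableSet {x : ℝ × ℝ × ℝ | (M : ℝ) ≤ ‖x‖} :=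
      fun M => (isClosed_le continuous_const continuous_norm).measurableSet
    have hanti : Antitone fun M : ℕ => {x : ℝ × ℝ × ℝ | (M : ℝ) ≤ ‖x‖} := by
      intro m n hmn x hx
      simp only [Set.mem_setOf_eq] at *
      exact le_trans (by exact_mod_cast hmn) hx
    have hempty : ⋂ M : ℕ, {x : ℝ × ℝ × ℝ | (M : ℝ) ≤ ‖x‖} = ∅ := by
      ext x
      simp only [Set.mem_iInter, Set.mem_setOf_eq, Set.mem_empty_iff_false, iff_false, not_forall,
        not_le]
      obtain ⟨M, hM⟩ := exists_nat_gt ‖x‖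
      exact ⟨M, hM⟩
    have := tendsto_measure_iInter_atTop (μ := ν) (fun M => (hmeasSet M).nullMeasurableSet) hanti
      ⟨0, measure_ne_top _ _⟩
    rwa [hempty, measure_empty] at this
  obtain ⟨M, hM⟩ : ∃ M : ℕ, ν {x : ℝ × ℝ × ℝ | (M : ℝ) ≤ ‖x‖} < ENNReal.ofReal ε' := by
    exact (htail.eventually (gt_mem_nhds (ENNReal.ofReal_pos.2 hε'))).exists
  have hνtail : (ν {x : ℝ × ℝ × ℝ | (M : ℝ) ≤ ‖x‖}).toReal ≤ ε' :=
    ENNReal.toReal_le_of_le_ofReal hε'.le hM.le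
  -- integral of cutoff against ν is small
  have hχν : ∫ x, cutoff M x ∂ν ≤ ε' := by
    have hA : MeasurableSet {x : ℝ × ℝ × ℝ | (M : ℝ) ≤ ‖x‖} :=
      (isClosed_le continuous_const continuous_norm).measurableSet
    have hmono : ∀ x, cutoff M x ≤ {x : ℝ × ℝ × ℝ | (M : ℝ) ≤ ‖x‖}.indicator (fun _ => (1:ℝ)) x := by
      intro x
      simp only [Set.indicator_apply]
      split_ifs with hmem
      · exact cutoff_le_one _ x
      · rw [cutoff_eq_zero _ x (not_le.1 (by simpa using hmem)).le]
    calc ∫ x, cutoff M x ∂ν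
        ≤ ∫ x, {x : ℝ × ℝ × ℝ | (M : ℝ) ≤ ‖x‖}.indicator (fun _ => (1:ℝ)) x ∂ν := by
          refine integral_mono ((cutoff M).integrable ν) ?_ hmono
          exact (integrable_const (1:ℝ)).indicator hA
      _ = (ν {x : ℝ × ℝ × ℝ | (M : ℝ) ≤ ‖x‖}).toReal • (1:ℝ) := integral_indicator_const (1:ℝ) hA
      _ ≤ ε' := by rw [smul_eq_mul, mul_one]; exact hνtail
  -- eventually the cutoff integrals along W are small
  have h4 : ∀ᶠ N in atTop, ∫ ω, cutoff M (W N ω) ∂μ ≤ 2 * ε' := by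
    filter_upwards [(hW (cutoff M)).eventually
      (eventually_le_nhds (lt_add_of_le_of_pos hχν hε'))] with N hN
    calc ∫ ω, cutoff M (W N ω) ∂μ ≤ ε' + ε' := hN
      _ = 2 * ε' := by ring
  -- convergence against g ∘ F
  have h5 : ∀ᶠ N in atTop, dist (∫ ω, g (F (W N ω)) ∂μ) (∫ p, g (F p) ∂ν) < ε / 4 := by
    have h5a := hW (g.compContinuous ⟨F, hFcont⟩)
    have heq : ∀ x : ℝ × ℝ × ℝ, (g.compContinuous ⟨F, hFcont⟩) x = g (F x) := fun _ => rfl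
    simp only [heq] at h5a
    obtain ⟨N₂, hN₂⟩ := Metric.tendsto_atTop.1 h5a (ε/4) (by positivity)
    exact eventually_atTop.2 ⟨N₂, hN₂⟩
  -- compact sets and uniform continuity
  set R : ℝ := (M : ℝ) + 1 with hRdef
  have hR : 0 < R := by positivity
  set B := Metric.closedBall (0 : ℝ × ℝ × ℝ) R with hBdef
  have hBcomp : IsCompact B := isCompact_closedBall _ _
  set K := F '' B with hKdef
  have hKcomp : IsCompact K := hBcomp.image hFcont
  set L := Metric.cthickening 1 K with hLdef
  have hLcomp : IsCompact L := hKcomp.cthickening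
  have hgu := hLcomp.uniformContinuousOn_of_continuous g.continuous.continuousOn
  obtain ⟨δ, hδpos, hδprop⟩ := Metric.uniformContinuousOn_iff.1 hgu (ε/4) (by positivity)
  set δ' := min δ 1 with hδ'def
  have hδ'pos : 0 < δ' := lt_min hδpos one_pos
  have h8 := happrox R hR δ' hδ'pos
  -- pointwise bound
  have hpt : ∀ N, (∀ x ∈ B, dist (Fn N x) (F x) < δ') →
      ∀ x : ℝ × ℝ × ℝ, |g (Fn N x) - g (F x)| ≤ ε/4 + 2*C*(cutoff M x) := by
    intro N hNx x
    rcases le_or_gt ‖x‖ R with h | h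
    · have hxB : x ∈ B := by rw [hBdef, Metric.mem_closedBall, dist_zero_right]; exact h
      have hFx : F x ∈ L := Metric.self_subset_cthickening K (Set.mem_image_of_mem F hxB)
      have hd := hNx x hxB
      have hFnx : Fn N x ∈ L := Metric.mem_cthickening_of_dist_le (Fn N x) (F x) 1 K
        (Set.mem_image_of_mem F hxB) (le_trans hd.le (min_le_right δ 1))
      have hlt := hδprop (Fn N x) hFnx (F x) hFx (lt_of_lt_of_le hd (min_le_left δ 1))
      rw [Real.dist_eq] at hlt
      have hχ := cutoff_nonneg M x
      nlinarith
    · have hχ1 : cutoff M x = 1 := cutoff_eq_one M x (by rw [hRdef] at h; linarith)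
      rw [hχ1]
      have h1 := hC (Fn N x)
      have h2 := hC (F x)
      have h3 : |g (Fn N x) - g (F x)| ≤ |g (Fn N x)| + |g (F x)| := abs_sub _ _
      linarith [hε.le]
  -- final assembly
  obtain ⟨Nm, hNm⟩ := eventually_atTop.1 (hmeas.and (h4.and (h5.and h8)))
  refine ⟨max Nm 1, fun n hn => ?_⟩
  obtain ⟨hmeasn, h4n, h5n, h8n⟩ := hNm n (le_trans (le_max_left _ _) hn)
  have hf1 : AEStronglyMeasurable (fun ω => g (Fn n (W n ω))) μ :=
    ((g.continuous.comp (hFncont n)).measurable.comp_aemeasurable hmeasn).aestronglyMeasurable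
  have hf2 : AEStronglyMeasurable (fun ω => g (F (W n ω))) μ :=
    ((g.continuous.comp hFcont).measurable.comp_aemeasurable hmeasn).aestronglyMeasurable
  have hif1 : Integrable (fun ω => g (Fn n (W n ω))) μ := integrable_of_bound _ hf1 C (fun ω => hC _)
  have hif2 : Integrable (fun ω => g (F (W n ω))) μ := integrable_of_bound _ hf2 C (fun ω => hC _)
  have hiχ : Integrable (fun ω => cutoff M (W n ω)) μ :=
    integrable_of_bound _ (((cutoff M).continuous.measurable.comp_aemeasurable hmeasn).aestronglyMeasurable) 1
      (fun ω => by rw [abs_of_nonneg (cutoff_nonneg M _)]; exact cutoff_le_one M _)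
  have hdiff : |∫ ω, g (Fn n (W n ω)) ∂μ - ∫ ω, g (F (W n ω)) ∂μ| ≤ ε/4 + 2*C*(2*ε') := by
    rw [← integral_sub hif1 hif2]
    calc |∫ ω, (g (Fn n (W n ω)) - g (F (W n ω))) ∂μ|
        ≤ ∫ ω, |g (Fn n (W n ω)) - g (F (W n ω))| ∂μ := by
          simpa [Real.norm_eq_abs] using norm_integral_le_integral_norm (μ := μ)
            (f := fun ω => g (Fn n (W n ω)) - g (F (W n ω)))
      _ ≤ ∫ ω, (ε/4 + 2*C*(cutoff M (W n ω))) ∂μ := by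
          refine integral_mono (hif1.sub hif2).abs
            ((integrable_const (ε/4)).add (hiχ.const_mul (2*C))) ?_
          intro ω
          exact hpt n h8n (W n ω)
      _ = ε/4 + 2*C * ∫ ω, cutoff M (W n ω) ∂μ := by
          rw [integral_add (integrable_const _) (hiχ.const_mul _), integral_const,
            integral_const_mul]
          simp
      _ ≤ ε/4 + 2*C*(2*ε') := by
          have := mul_le_mul_of_nonneg_left h4n (by positivity : (0:ℝ) ≤ 2*C)
          linarith
  have hεε' : ε' * (16*C+16) = ε := by rw [hε'def]; field_simp
  calc dist (∫ ω, g (Fn n (W n ω)) ∂μ) (∫ p, g (F p) ∂ν)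
      ≤ dist (∫ ω, g (Fn n (W n ω)) ∂μ) (∫ ω, g (F (W n ω)) ∂μ)
        + dist (∫ ω, g (F (W n ω)) ∂μ) (∫ p, g (F p) ∂ν) := dist_triangle _ _ _
    _ < (ε/4 + 2*C*(2*ε')) + ε/4 := by
        rw [Real.dist_eq]
        exact add_lt_add_of_le_of_lt hdiff h5n
    _ ≤ ε := by nlinarith

end CMT

noncomputable def synthF (p0 ψ0 ψ1 : ℝ) : ℝ × ℝ × ℝ → ℝ := fun p =>
  (ψ0 - ψ1) * p.1 + (Real.sqrt p0 * p.2.1 + Real.sqrt (1 - p0) * p.2.2)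

noncomputable def synthFn (p0 ψ0 ψ1 : ℝ) (n : ℕ) : ℝ × ℝ × ℝ → ℝ := fun p =>
  (ψ0 - ψ1) * p.1 + (Real.sqrt (p0 + p.1 / Real.sqrt n) * p.2.1
    + Real.sqrt (1 - (p0 + p.1 / Real.sqrt n)) * p.2.2)

lemma synthF_cont (p0 ψ0 ψ1 : ℝ) : Continuous (synthF p0 ψ0 ψ1) := by
  unfold synthF; fun_prop

lemma synthFn_cont (p0 ψ0 ψ1 : ℝ) (n : ℕ) : Continuous (synthFn p0 ψ0 ψ1 n) := by
  unfold synthFn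
  apply Continuous.add
  · fun_prop
  apply Continuous.add
  · exact (Real.continuous_sqrt.comp (by fun_prop)).mul (continuous_fst.comp continuous_snd)
  · exact (Real.continuous_sqrt.comp (by fun_prop)).mul (continuous_snd.comp continuous_snd)

lemma synthFn_approx (p0 ψ0 ψ1 : ℝ) (R : ℝ) (hR : 0 < R) (δ : ℝ) (hδ : 0 < δ) :
    ∀ᶠ n : ℕ in atTop, ∀ x ∈ Metric.closedBall (0 : ℝ × ℝ × ℝ) R,
      dist (synthFn p0 ψ0 ψ1 n x) (synthF p0 ψ0 ψ1 x) < δ := by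
  have h1 : Tendsto (fun n : ℕ => Real.sqrt (n : ℝ)) atTop atTop := by
    apply tendsto_atTop_atTop.2
    intro b
    refine ⟨⌈b * b⌉₊, fun n hn => ?_⟩
    have hbn : (b * b : ℝ) ≤ (n : ℝ) := le_trans (Nat.le_ceil _) (by exact_mod_cast hn)
    calc b ≤ |b| := le_abs_self b
      _ = Real.sqrt (b * b) := (Real.sqrt_mul_self_eq_abs b).symm
      _ ≤ Real.sqrt (n : ℝ) := Real.sqrt_le_sqrt hbn
  have h2 : Tendsto (fun n : ℕ => R / Real.sqrt (n : ℝ)) atTop (nhds 0) :=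
    Tendsto.div_atTop tendsto_const_nhds h1
  have h3 : Tendsto (fun n : ℕ => Real.sqrt (R / Real.sqrt (n : ℝ))) atTop (nhds 0) := by
    have := (Real.continuous_sqrt.tendsto 0).comp h2
    rwa [Real.sqrt_zero] at this
  have htend : Tendsto (fun n : ℕ => 2 * R * Real.sqrt (R / Real.sqrt (n : ℝ))) atTop (nhds 0) := by
    simpa using h3.const_mul (2 * R)
  filter_upwards [htend.eventually (gt_mem_nhds hδ), eventually_ge_atTop 1] with n hn hn1
  intro x hx
  have hxnorm : ‖x‖ ≤ R := by rwa [Metric.mem_closedBall, dist_zero_right] at hx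
  have hx1 : |x.1| ≤ R := le_trans (norm_fst_le x) hxnorm
  have hx21 : |x.2.1| ≤ R := le_trans (le_trans (norm_fst_le x.2) (norm_snd_le x)) hxnorm
  have hx22 : |x.2.2| ≤ R := le_trans (le_trans (norm_snd_le x.2) (norm_snd_le x)) hxnorm
  have hsn : (1:ℝ) ≤ Real.sqrt (n : ℝ) := by
    rw [show (1:ℝ) = Real.sqrt 1 from Real.sqrt_one.symm]
    exact Real.sqrt_le_sqrt (by exact_mod_cast hn1)
  have hsnpos : (0:ℝ) < Real.sqrt (n : ℝ) := lt_of_lt_of_le one_pos hsn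
  set t := x.1 / Real.sqrt (n : ℝ) with ht
  have habs_t : |t| ≤ R / Real.sqrt (n : ℝ) := by
    rw [ht, abs_div, abs_of_pos hsnpos]
    gcongr
  have hA : |Real.sqrt (p0 + t) - Real.sqrt p0| ≤ Real.sqrt (R / Real.sqrt (n : ℝ)) := by
    calc |Real.sqrt (p0 + t) - Real.sqrt p0| ≤ Real.sqrt |(p0 + t) - p0| :=
          abs_sqrt_sub_sqrt_le _ _
      _ = Real.sqrt |t| := by norm_num
      _ ≤ _ := Real.sqrt_le_sqrt habs_t
  have hB : |Real.sqrt (1 - (p0 + t)) - Real.sqrt (1 - p0)| ≤ Real.sqrt (R / Real.sqrt (n : ℝ)) := by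
    calc |Real.sqrt (1 - (p0 + t)) - Real.sqrt (1 - p0)| ≤ Real.sqrt |(1 - (p0 + t)) - (1 - p0)| :=
          abs_sqrt_sub_sqrt_le _ _
      _ = Real.sqrt |t| := by rw [show (1 - (p0 + t)) - (1 - p0) = -t by ring, abs_neg]
      _ ≤ _ := Real.sqrt_le_sqrt habs_t
  have hdiff : synthFn p0 ψ0 ψ1 n x - synthF p0 ψ0 ψ1 x
      = (Real.sqrt (p0 + t) - Real.sqrt p0) * x.2.1
        + (Real.sqrt (1 - (p0 + t)) - Real.sqrt (1 - p0)) * x.2.2 := by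
    simp only [synthFn, synthF, ht]
    ring
  rw [Real.dist_eq, hdiff]
  have hs0 : 0 ≤ Real.sqrt (R / Real.sqrt (n : ℝ)) := Real.sqrt_nonneg _
  calc |(Real.sqrt (p0 + t) - Real.sqrt p0) * x.2.1
        + (Real.sqrt (1 - (p0 + t)) - Real.sqrt (1 - p0)) * x.2.2|
      ≤ |(Real.sqrt (p0 + t) - Real.sqrt p0) * x.2.1|
        + |(Real.sqrt (1 - (p0 + t)) - Real.sqrt (1 - p0)) * x.2.2| := abs_add_le _ _
    _ = |Real.sqrt (p0 + t) - Real.sqrt p0| * |x.2.1|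
        + |Real.sqrt (1 - (p0 + t)) - Real.sqrt (1 - p0)| * |x.2.2| := by
        rw [abs_mul, abs_mul]
    _ ≤ Real.sqrt (R / Real.sqrt (n : ℝ)) * R + Real.sqrt (R / Real.sqrt (n : ℝ)) * R :=
        add_le_add (mul_le_mul hA hx21 (abs_nonneg _) hs0) (mul_le_mul hB hx22 (abs_nonneg _) hs0)
    _ = 2 * R * Real.sqrt (R / Real.sqrt (n : ℝ)) := by ring
    _ < δ := hn

/-- Theorem 1(ii), asymptotic normality of the synthesis estimator:
`N₀` is the Binomial count of `V*ᵢ = 0` among `N` i.i.d. samples, `p₀^N = N₀/N`,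
`√N₀(ψ̂_gen − ψ₀) ⇒ N(0,σ₀²)`, `√N₁(ψ̂₁ − ψ₁) ⇒ N(0,σ₁²)`, asymptotically
independent of each other and of `p₀^N`; then
`√N(p₀^N ψ̂_gen + (1−p₀^N) ψ̂₁ − (p₀ψ₀+(1−p₀)ψ₁))
  ⇒ N(0, p₀(1−p₀)(ψ₀−ψ₁)² + p₀σ₀² + (1−p₀)σ₁²)`. -/
theorem synthesis_estimator_asymptotic_normality
    {Ω : Type*} [MeasurableSpace Ω] (μ : Measure Ω) [IsProbabilityMeasure μ]
    (p0 : ℝ) (hp0 : 0 < p0) (hp0' : p0 < 1)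
    (I : ℕ → Ω → ℝ) (hImeas : ∀ i, Measurable (I i))
    (hIindep : iIndepFun I μ)
    (hIval : ∀ i ω, I i ω = 0 ∨ I i ω = 1)
    (hIp : ∀ i, μ {ω | I i ω = 1} = ENNReal.ofReal p0)
    (N0 : ℕ → Ω → ℝ) (hN0 : ∀ N ω, N0 N ω = ∑ i ∈ Finset.range N, I i ω)
    (p0N : ℕ → Ω → ℝ) (hp0N : ∀ N ω, p0N N ω = N0 N ω / N)
    (ψgen ψ1hat : ℕ → Ω → ℝ) (ψ0 ψ1 σ0 σ1 : ℝ) (hσ0 : 0 ≤ σ0) (hσ1 : 0 ≤ σ1)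
    (hgen : ConvInDist μ (fun N ω => Real.sqrt (N0 N ω) * (ψgen N ω - ψ0))
      (gaussianReal 0 (σ0 ^ 2).toNNReal))
    (h1 : ConvInDist μ (fun N ω => Real.sqrt ((N : ℝ) - N0 N ω) * (ψ1hat N ω - ψ1))
      (gaussianReal 0 (σ1 ^ 2).toNNReal))
    (hjoint : ConvInDist μ
      (fun N ω =>
        ((Real.sqrt N * (p0N N ω - p0),
          (Real.sqrt (N0 N ω) * (ψgen N ω - ψ0),
           Real.sqrt ((N : ℝ) - N0 N ω) * (ψ1hat N ω - ψ1))) : ℝ × ℝ × ℝ))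
      ((gaussianReal 0 (p0 * (1 - p0)).toNNReal).prod
        ((gaussianReal 0 (σ0 ^ 2).toNNReal).prod (gaussianReal 0 (σ1 ^ 2).toNNReal)))) :
    ConvInDist μ
      (fun N ω => Real.sqrt N *
        (p0N N ω * ψgen N ω + (1 - p0N N ω) * ψ1hat N ω - (p0 * ψ0 + (1 - p0) * ψ1)))
      (gaussianReal 0
        (p0 * (1 - p0) * (ψ0 - ψ1) ^ 2 + p0 * σ0 ^ 2 + (1 - p0) * σ1 ^ 2).toNNReal) := by
  classical
  set W : ℕ → Ω → ℝ × ℝ × ℝ := fun N ω =>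
    ((Real.sqrt N * (p0N N ω - p0),
      (Real.sqrt (N0 N ω) * (ψgen N ω - ψ0),
       Real.sqrt ((N : ℝ) - N0 N ω) * (ψ1hat N ω - ψ1))) : ℝ × ℝ × ℝ) with hWdef
  set ν := ((gaussianReal 0 (p0 * (1 - p0)).toNNReal).prod
      ((gaussianReal 0 (σ0 ^ 2).toNNReal).prod (gaussianReal 0 (σ1 ^ 2).toNNReal))) with hνdef
  have hWconv : ConvInDist μ W ν := hjoint
  -- the pushforward of ν under synthF is the target Gaussian
  have hmap : ν.map (synthF p0 ψ0 ψ1) = gaussianReal 0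
      (p0 * (1 - p0) * (ψ0 - ψ1) ^ 2 + p0 * σ0 ^ 2 + (1 - p0) * σ1 ^ 2).toNNReal := by
    have hlin := gaussianReal_map_linear3 (ψ0 - ψ1) (Real.sqrt p0) (Real.sqrt (1 - p0))
      (p0 * (1 - p0)).toNNReal (σ0 ^ 2).toNNReal (σ1 ^ 2).toNNReal
    have heq : (fun p : ℝ × ℝ × ℝ => (ψ0 - ψ1) * p.1
        + (Real.sqrt p0 * p.2.1 + Real.sqrt (1 - p0) * p.2.2)) = synthF p0 ψ0 ψ1 := rfl
    rw [heq] at hlin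
    rw [hνdef, hlin]
    congr 1
    apply NNReal.coe_injective
    have h1 : (0:ℝ) ≤ p0 * (1 - p0) := by nlinarith
    have h2 : (0:ℝ) ≤ p0 * (1 - p0) * (ψ0 - ψ1) ^ 2 + p0 * σ0 ^ 2 + (1 - p0) * σ1 ^ 2 := by
      nlinarith [sq_nonneg (ψ0 - ψ1), sq_nonneg σ0, sq_nonneg σ1]
    push_cast
    rw [Real.coe_toNNReal _ h1, Real.coe_toNNReal _ (sq_nonneg σ0),
      Real.coe_toNNReal _ (sq_nonneg σ1), Real.coe_toNNReal _ h2,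
      Real.sq_sqrt hp0.le, Real.sq_sqrt (by linarith : (0:ℝ) ≤ 1 - p0)]
    ring
  -- measurability of the first coordinate
  have hp0Nmeas : ∀ N, Measurable (p0N N) := by
    intro N
    have hfe : p0N N = fun ω => (∑ i ∈ Finset.range N, I i ω) / N :=
      funext fun ω => by rw [hp0N, hN0]
    rw [hfe]
    exact (Finset.measurable_sum _ fun i _ => hImeas i).div_const _
  have hXmeas : ∀ N : ℕ, Measurable fun ω => Real.sqrt (N:ℝ) * (p0N N ω - p0) :=
    fun N => ((hp0Nmeas N).sub_const _).const_mul _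
  have htan : Measurable Real.tan := by
    rw [show Real.tan = fun x => Real.sin x / Real.cos x from funext Real.tan_eq_sin_div_cos]
    exact Real.measurable_sin.div Real.measurable_cos
  -- a.e.-measurability of coordinates of W, eventually in N
  have key : ∀ φ : ℝ × ℝ × ℝ → ℝ, Continuous φ →
      ∀ᶠ N in atTop, AEMeasurable (fun ω => φ (W N ω)) μ := by
    intro φ hφ
    have hbd : ∀ x y : ℝ × ℝ × ℝ,
        dist (π/2 + Real.arctan (φ x)) (π/2 + Real.arctan (φ y)) ≤ π := by
      intro x y
      rw [Real.dist_eq]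
      have ha1 := Real.arctan_lt_pi_div_two (φ x)
      have ha2 := Real.neg_pi_div_two_lt_arctan (φ x)
      have hb1 := Real.arctan_lt_pi_div_two (φ y)
      have hb2 := Real.neg_pi_div_two_lt_arctan (φ y)
      rw [abs_le]
      constructor <;> linarith
    set h : BoundedContinuousFunction (ℝ × ℝ × ℝ) ℝ := BoundedContinuousFunction.mkOfBound
      ⟨fun x => π/2 + Real.arctan (φ x),
        continuous_const.add (Real.continuous_arctan.comp hφ)⟩ π hbd with hhdef
    have hcoe : ∀ x, h x = π/2 + Real.arctan (φ x) := fun x => rfl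
    have hposval : ∀ x, 0 < h x := by
      intro x
      rw [hcoe]
      have := Real.neg_pi_div_two_lt_arctan (φ x)
      linarith
    have hpos : 0 < ∫ x, h x ∂ν := by
      refine (integral_pos_iff_support_of_nonneg (fun x => (hposval x).le) (h.integrable ν)).2 ?_
      have hsup : (Function.support fun x => h x) = Set.univ :=
        Set.eq_univ_of_forall fun x => (hposval x).ne'
      rw [hsup, measure_univ]
      exact zero_lt_one
    obtain ⟨Na, hNa⟩ := Metric.tendsto_atTop.1 (hWconv h) ((∫ x, h x ∂ν) / 2) (by linarith)
    refine eventually_atTop.2 ⟨Na, fun n hn => ?_⟩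
    have hgt : (∫ x, h x ∂ν) / 2 < ∫ ω, h (W n ω) ∂μ := by
      have hd := hNa n hn
      rw [Real.dist_eq] at hd
      rcases abs_sub_lt_iff.1 hd with ⟨hd1, hd2⟩
      linarith
    have hne : ∫ ω, h (W n ω) ∂μ ≠ 0 := (lt_trans (half_pos hpos) hgt).ne'
    have hint : Integrable (fun ω => h (W n ω)) μ := by
      by_contra hni
      exact hne (integral_undef hni)
    have haem : AEMeasurable (fun ω => h (W n ω)) μ := hint.aestronglyMeasurable.aemeasurable
    have hrec : (fun ω => φ (W n ω))
        = (fun t => Real.tan (t - π/2)) ∘ (fun ω => h (W n ω)) := by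
      funext ω
      simp only [Function.comp_apply, hcoe, add_sub_cancel_left, Real.tan_arctan]
    rw [hrec]
    exact (htan.comp (measurable_id.sub_const _)).comp_aemeasurable haem
  have hmeasW : ∀ᶠ N in atTop, AEMeasurable (W N) μ := by
    filter_upwards [key (fun x => x.2.1) (by fun_prop), key (fun x => x.2.2) (by fun_prop)]
      with N hY hZ
    exact (hXmeas N).aemeasurable.prodMk (hY.prodMk hZ)
  -- apply the continuous mapping theorem
  have hcomp := convInDist_comp ν W hWconv hmeasW (synthFn p0 ψ0 ψ1) (synthF p0 ψ0 ψ1)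
    (synthFn_cont p0 ψ0 ψ1) (synthF_cont p0 ψ0 ψ1)
    (fun R hR δ hδ => synthFn_approx p0 ψ0 ψ1 R hR δ hδ)
  rw [hmap] at hcomp
  -- the algebraic identity
  have hstep1 : ∀ n : ℕ, 1 ≤ n → ∀ ω,
      Real.sqrt n * (p0N n ω * ψgen n ω + (1 - p0N n ω) * ψ1hat n ω
        - (p0 * ψ0 + (1 - p0) * ψ1)) = synthFn p0 ψ0 ψ1 n (W n ω) := by
    intro n hn ω
    have hNpos : (0:ℝ) < n := by exact_mod_cast hn
    have hsq : (0:ℝ) < Real.sqrt n := Real.sqrt_pos.2 hNpos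
    have hss : Real.sqrt n * Real.sqrt n = (n:ℝ) := Real.mul_self_sqrt hNpos.le
    have hN0nn : 0 ≤ N0 n ω := by
      rw [hN0]
      refine Finset.sum_nonneg fun i _ => ?_
      rcases hIval i ω with h | h <;> rw [h] <;> norm_num
    have hN0le : N0 n ω ≤ (n:ℝ) := by
      rw [hN0]
      calc ∑ i ∈ Finset.range n, I i ω ≤ ∑ i ∈ Finset.range n, 1 := by
            refine Finset.sum_le_sum fun i _ => ?_
            rcases hIval i ω with h | h <;> rw [h] <;> norm_num
        _ = (n:ℝ) := by simp
    have hp0nn : 0 ≤ p0N n ω := by rw [hp0N]; positivity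
    have hp0le : p0N n ω ≤ 1 := by
      rw [hp0N]
      exact (div_le_one hNpos).2 hN0le
    have hxcoord : p0 + (Real.sqrt n * (p0N n ω - p0)) / Real.sqrt n = p0N n ω := by
      field_simp
      ring
    have key1 : Real.sqrt (p0N n ω) * Real.sqrt (N0 n ω) = Real.sqrt n * p0N n ω := by
      rw [← Real.sqrt_mul hp0nn]
      have hq : p0N n ω * N0 n ω = (N0 n ω / Real.sqrt n) ^ 2 := by
        rw [hp0N, div_pow, Real.sq_sqrt hNpos.le]
        ring
      rw [hq, Real.sqrt_sq (by positivity)]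
      rw [hp0N]
      field_simp
      nlinarith [hss]
    have key2 : Real.sqrt (1 - p0N n ω) * Real.sqrt ((n:ℝ) - N0 n ω)
        = Real.sqrt n * (1 - p0N n ω) := by
      rw [← Real.sqrt_mul (by linarith)]
      have hq : (1 - p0N n ω) * ((n:ℝ) - N0 n ω) = (((n:ℝ) - N0 n ω) / Real.sqrt n) ^ 2 := by
        rw [hp0N, div_pow, Real.sq_sqrt hNpos.le]
        field_simp
      rw [hq, Real.sqrt_sq (div_nonneg (by linarith) hsq.le)]
      rw [hp0N]
      field_simp
      nlinarith [hss]
    show _ = synthFn p0 ψ0 ψ1 n (W n ω)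
    simp only [synthFn, hWdef]
    rw [hxcoord]
    have e1 : Real.sqrt (p0N n ω) * (Real.sqrt (N0 n ω) * (ψgen n ω - ψ0))
        = Real.sqrt n * p0N n ω * (ψgen n ω - ψ0) := by rw [← mul_assoc, key1]
    have e2 : Real.sqrt (1 - p0N n ω) * (Real.sqrt ((n:ℝ) - N0 n ω) * (ψ1hat n ω - ψ1))
        = Real.sqrt n * (1 - p0N n ω) * (ψ1hat n ω - ψ1) := by rw [← mul_assoc, key2]
    rw [e1, e2]
    ring
  -- conclude
  intro g
  refine Tendsto.congr' ?_ (hcomp g)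
  filter_upwards [eventually_ge_atTop 1] with n hn
  exact integral_congr_ae (ae_of_all _ fun ω => congrArg g (hstep1 n hn ω).symm)
end

section
/- Let R² = (a − b)/(c − b) with b < c, and suppose a = p_0 a_0 + p_1 a_1 + t_a, b = p_0 b_0 + p_1 b_1 + t_b, c = p_0 c_0 + p_1 c_1 + t_b', with b_j < c_j and R²_j = (a_j − b_j)/(c_j − b_j) for j = 0,1, and Δ_j = c_{1−j} − b_{1−j} > 0. Then R² = [p_0 R²_0/Δ_0 + p_1 R²_1/Δ_1 + (t_a − t_b)/(Δ_0 Δ_1)] / [p_0/Δ_0 + p_1/Δ_1 + (t_{b'} − t_b)/(Δ_0 Δ_1)], provided the denominator is nonzero. -/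
/-- algebraic separability of the partial `R²` sensitivity
parameter, Example 4: if `R² = (a−b)/(c−b)` with the super-population
quantities decomposing as mixtures over the two sub-populations, then `R²` is a
weighted-harmonic-mean type combination of the sub-population `R²ⱼ`'s. -/
theorem partial_R2_separability
    (p0 p1 a b c a0 a1 b0 b1 c0 c1 ta tb tb' R2 R20 R21 Δ0 Δ1 : ℝ)
    (hp0 : 0 < p0) (hp0' : p0 < 1) (hp : p0 + p1 = 1)
    (hbc : b < c) (hb0 : b0 < c0) (hb1 : b1 < c1)
    (ha : a = p0 * a0 + p1 * a1 + ta)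
    (hb : b = p0 * b0 + p1 * b1 + tb)
    (hc : c = p0 * c0 + p1 * c1 + tb')
    (hR : R2 = (a - b) / (c - b))
    (hR0 : R20 = (a0 - b0) / (c0 - b0))
    (hR1 : R21 = (a1 - b1) / (c1 - b1))
    (hΔ0 : Δ0 = c1 - b1) (hΔ1 : Δ1 = c0 - b0)
    (hden : p0 / Δ0 + p1 / Δ1 + (tb' - tb) / (Δ0 * Δ1) ≠ 0) :
    R2 = (p0 * R20 / Δ0 + p1 * R21 / Δ1 + (ta - tb) / (Δ0 * Δ1)) /
      (p0 / Δ0 + p1 / Δ1 + (tb' - tb) / (Δ0 * Δ1)) := by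
  have h0 : Δ0 ≠ 0 := by rw [hΔ0]; linarith
  have h1 : Δ1 ≠ 0 := by rw [hΔ1]; linarith
  have hcb : c - b ≠ 0 := by linarith
  have key : (p0 * R20 / Δ0 + p1 * R21 / Δ1 + (ta - tb) / (Δ0 * Δ1)) * (Δ0 * Δ1)
      = a - b := by
    subst hR0 hR1 hΔ0 hΔ1 ha hb
    field_simp
    ring
  have key2 : (p0 / Δ0 + p1 / Δ1 + (tb' - tb) / (Δ0 * Δ1)) * (Δ0 * Δ1)
      = c - b := by
    subst hΔ0 hΔ1 hb hc
    field_simp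
    ring
  rw [hR, ← key, ← key2, mul_div_mul_right _ _ (mul_ne_zero h0 h1)]
end
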